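/- arXiv:1901.03803 — 2 statements merged into one kernel-verified Lean document; each statement's English description precedes it below -/
import Mathlib

section
/- Let H and H₀ be complex Hilbert spaces, (X,μ) a σ-finite measure space, k : H₀ → H a bounded linear operator, and f : X → H weakly measurable. Suppose f is a family of local ck-atoms for H₀, i.e.: (i) for every g ∈ L²(X,μ) the weak integral ∫_X g f dμ exists in H, and (ii) there exist a > 0 and a map ℓ assigning to each x ∈ X a linear functional ℓ(x) : H₀ → ℂ such that for every h ∈ H₀ the function x ↦ ℓ(x)(h) belongs to L²(X,μ) with L²-norm at most a‖h‖, and k h = ∫_X ℓ(·)(h) f dμ (weak integral). Then f is a ck-frame for H with respect to H₀; in fact a⁻²‖k*(h)‖² ≤ ∫_X |⟨h, f(x)⟩|² dμ(x) for all h ∈ H, and f is a c-Bessel mapping for H. -/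
/-!
Since `g ↦ ∫ g ⟪f ·, h⟫` is defined on all of `L²`, the closed graph theorem makes it a bounded
functional; its Riesz representative is `conj ⟪f ·, h⟫`, which therefore lies in `L²` (a form of
Landau's resonance theorem). A second closed-graph argument shows that the analysis operator
`T h = ⟪f ·, h⟫` is bounded `H → L²`, which is the Bessel bound. For the lower bound put
`h₀ = k† h`; then `‖h₀‖² = ⟪k h₀, h⟫ = ∫ ℓ(·)(h₀) ⟪f ·, h⟫ ≤ ‖ℓ(·)(h₀)‖₂ ‖T h‖ ≤ a ‖h₀‖ ‖T h‖`
by Cauchy–Schwarz in `L²`.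
-/

open MeasureTheory Filter Topology
open scoped ENNReal InnerProductSpace InnerProduct ComplexConjugate

section ClosedGraph

variable {𝕜 E F X : Type*} [NontriviallyNormedField 𝕜]
  [NormedAddCommGroup E] [NormedSpace 𝕜 E] [CompleteSpace E]
  [NormedAddCommGroup F] [NormedSpace 𝕜 F] [CompleteSpace F]
  [MeasurableSpace X] {μ : Measure X} {p : ℝ≥0∞} [Fact (1 ≤ p)]

theorem LinearMap.continuous_of_exists_subseq_tendsto_ae (T : E →ₗ[𝕜] Lp F p μ)
    (hT : ∀ (u : ℕ → E) (x : E), Tendsto u atTop (𝓝 x) → ∃ ns : ℕ → ℕ, StrictMono ns ∧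
      ∀ᵐ y ∂μ, Tendsto (fun i => T (u (ns i)) y) atTop (𝓝 (T x y))) :
    Continuous T := by
  refine T.continuous_of_seq_closed_graph fun u x v hu hTu => ?_
  obtain ⟨ns, hns, hae⟩ := hT u x hu
  obtain ⟨ms, hms, hae'⟩ :=
    (tendstoInMeasure_of_tendsto_Lp (hTu.comp hns.tendsto_atTop)).exists_seq_tendsto_ae
  refine Lp.ext ?_
  filter_upwards [hae, hae'] with y hTx hv
  exact tendsto_nhds_unique hv (hTx.comp hms.tendsto_atTop)

end ClosedGraph

section Multiplier

variable {𝕜 X : Type*} [RCLike 𝕜] [MeasurableSpace X] {μ : Measure X} {p : ℝ≥0∞} [Fact (1 ≤ p)]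
  {φ : X → 𝕜}

noncomputable def Lp.mulToL1 (hφ : ∀ g : Lp 𝕜 p μ, Integrable (fun x => g x * φ x) μ) :
    Lp 𝕜 p μ →ₗ[𝕜] Lp 𝕜 1 μ where
  toFun g := (hφ g).toL1 _
  map_add' g₁ g₂ := by
    rw [← Integrable.toL1_add]
    refine (Integrable.toL1_eq_toL1_iff _ _ _ _).2 ?_
    filter_upwards [Lp.coeFn_add g₁ g₂] with x hx
    rw [hx, Pi.add_apply, add_mul, Pi.add_apply]
  map_smul' c g := by
    rw [RingHom.id_apply, ← Integrable.toL1_smul]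
    refine (Integrable.toL1_eq_toL1_iff _ _ _ _).2 ?_
    filter_upwards [Lp.coeFn_smul c g] with x hx
    rw [hx, Pi.smul_apply, smul_mul_assoc]

omit [Fact (1 ≤ p)] in
theorem Lp.coeFn_mulToL1 (hφ : ∀ g : Lp 𝕜 p μ, Integrable (fun x => g x * φ x) μ)
    (g : Lp 𝕜 p μ) : Lp.mulToL1 hφ g =ᵐ[μ] fun x => g x * φ x :=
  (hφ g).coeFn_toL1

theorem Lp.continuous_mulToL1 (hφ : ∀ g : Lp 𝕜 p μ, Integrable (fun x => g x * φ x) μ) :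
    Continuous (Lp.mulToL1 hφ) := by
  refine (Lp.mulToL1 hφ).continuous_of_exists_subseq_tendsto_ae fun u g hu => ?_
  obtain ⟨ns, hns, hae⟩ := (tendstoInMeasure_of_tendsto_Lp hu).exists_seq_tendsto_ae
  have hcoe : ∀ᵐ x ∂μ, ∀ i, Lp.mulToL1 hφ (u (ns i)) x = u (ns i) x * φ x :=
    ae_all_iff.2 fun i => Lp.coeFn_mulToL1 hφ _
  refine ⟨ns, hns, ?_⟩
  filter_upwards [hae, hcoe, Lp.coeFn_mulToL1 hφ g] with x hx hcoe_x hg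
  simpa only [hcoe_x, hg] using hx.mul_const (φ x)

omit [Fact (1 ≤ p)] in
theorem indicatorConstLp_one_mul_ae_eq {s : Set X} (hs : MeasurableSet s) (hμs : μ s ≠ ∞) :
    (fun x => indicatorConstLp p hs hμs (1 : 𝕜) x * φ x) =ᵐ[μ] s.indicator φ := by
  filter_upwards [indicatorConstLp_coeFn (p := p) (hs := hs) (hμs := hμs) (c := (1 : 𝕜))]
    with x hx
  simp only [hx, ← Set.indicator_mul_left, one_mul]

theorem memLp_two_of_forall_integrable_mul [SigmaFinite μ]
    (hφ : ∀ g : Lp 𝕜 2 μ, Integrable (fun x => g x * φ x) μ) : MemLp φ 2 μ := by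
  let Λ : StrongDual 𝕜 (Lp 𝕜 2 μ) :=
    (L1.integralCLM' 𝕜).comp ⟨Lp.mulToL1 hφ, Lp.continuous_mulToL1 hφ⟩
  have hΛ : ∀ g, Λ g = ∫ x, g x * φ x ∂μ := fun g => by
    rw [← integral_congr_ae (Lp.coeFn_mulToL1 hφ g), ← L1.integral_eq_integral,
      L1.integral_eq' 𝕜]
    rfl
  set w := (InnerProductSpace.toDual 𝕜 (Lp 𝕜 2 μ)).symm Λ
  have hφw : φ =ᵐ[μ] fun x => conj (w x) := by
    refine ae_eq_of_forall_setIntegral_eq_of_sigmaFinite (fun s hs hμs => ?_)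
      (fun s hs hμs => ?_) (fun s hs hμs => ?_)
    · refine (integrable_indicator_iff hs).1 ?_
      exact (hφ _).congr (indicatorConstLp_one_mul_ae_eq hs hμs.ne)
    · have hw : IntegrableOn w s μ :=
        integrableOn_Lp_of_measure_ne_top w fact_one_le_two_ennreal.elim hμs.ne
      exact memLp_one_iff_integrable.1 (memLp_one_iff_integrable.2 hw).star
    · calc ∫ x in s, φ x ∂μ = Λ (indicatorConstLp 2 hs hμs.ne 1) := by
            rw [hΛ, integral_congr_ae (indicatorConstLp_one_mul_ae_eq hs hμs.ne),
              integral_indicator hs]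
        _ = conj ⟪indicatorConstLp 2 hs hμs.ne 1, w⟫_𝕜 := by
            rw [inner_conj_symm, InnerProductSpace.toDual_symm_apply]
        _ = ∫ x in s, conj (w x) ∂μ := by
            rw [L2.inner_indicatorConstLp_one, integral_conj]
  exact (Lp.memLp w).star.ae_eq hφw.symm

end Multiplier

theorem eLpNorm_two_sq {X E : Type*} [MeasurableSpace X] [NormedAddCommGroup E] (μ : Measure X)
    (φ : X → E) : eLpNorm φ 2 μ ^ 2 = ∫⁻ x, ‖φ x‖ₑ ^ 2 ∂μ := by
  simpa using eLpNorm_nnreal_pow_eq_lintegral (f := φ) (μ := μ) (p := 2) two_ne_zero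

section AnalysisOperator

variable {𝕜 H X : Type*} [RCLike 𝕜] [NormedAddCommGroup H] [InnerProductSpace 𝕜 H]
  [MeasurableSpace X] {μ : Measure X} {f : X → H} (hf : ∀ h, MemLp (fun x => ⟪f x, h⟫_𝕜) 2 μ)

noncomputable def analysisMap : H →ₗ[𝕜] Lp 𝕜 2 μ where
  toFun h := (hf h).toLp _
  map_add' h₁ h₂ := by
    rw [← MemLp.toLp_add]
    exact MemLp.toLp_congr _ _ (ae_of_all _ fun x => inner_add_right _ _ _)
  map_smul' c h := by
    rw [RingHom.id_apply, ← MemLp.toLp_const_smul]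
    exact MemLp.toLp_congr _ _ (ae_of_all _ fun x => inner_smul_right _ _ _)

theorem coeFn_analysisMap (h : H) :
    analysisMap hf h =ᵐ[μ] fun x => ⟪f x, h⟫_𝕜 :=
  (hf h).coeFn_toLp

theorem continuous_analysisMap [CompleteSpace H] : Continuous (analysisMap hf) := by
  refine (analysisMap hf).continuous_of_exists_subseq_tendsto_ae
    fun u h hu => ⟨id, strictMono_id, ?_⟩
  have hcoe : ∀ᵐ x ∂μ, ∀ n, analysisMap hf (u n) x = ⟪f x, u n⟫_𝕜 :=
    ae_all_iff.2 fun n => coeFn_analysisMap hf _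
  filter_upwards [hcoe, coeFn_analysisMap hf h] with x hcoe_x hx
  simpa only [id, hcoe_x, hx] using tendsto_const_nhds.inner hu

noncomputable def analysisOperator [CompleteSpace H] : H →L[𝕜] Lp 𝕜 2 μ :=
  ⟨analysisMap hf, continuous_analysisMap hf⟩

theorem coeFn_analysisOperator [CompleteSpace H] (h : H) :
    analysisOperator hf h =ᵐ[μ] fun x => ⟪f x, h⟫_𝕜 :=
  coeFn_analysisMap hf h

theorem lintegral_nnnorm_inner_sq_eq [CompleteSpace H] (h : H) :
    ∫⁻ x, (‖⟪h, f x⟫_𝕜‖₊ : ℝ≥0∞) ^ 2 ∂μ = ENNReal.ofReal (‖analysisOperator hf h‖ ^ 2) := by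
  rw [ENNReal.ofReal_pow (norm_nonneg _), ofReal_norm]
  change _ = ‖(hf h).toLp _‖ₑ ^ 2
  rw [Lp.enorm_toLp, eLpNorm_two_sq]
  refine lintegral_congr fun x => ?_
  rw [← enorm_eq_nnnorm, ← ofReal_norm, norm_inner_symm, ofReal_norm]

variable {H₀ : Type*} [NormedAddCommGroup H₀] [InnerProductSpace 𝕜 H₀] [CompleteSpace H₀]
  [CompleteSpace H]

theorem norm_adjoint_apply_le_mul_norm_analysisOperator (k : H₀ →L[𝕜] H) {ℓ : X → H₀ → 𝕜} {a : ℝ}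
    (ha : 0 ≤ a) (hℓL2 : ∀ h₀, MemLp (fun x => ℓ x h₀) 2 μ)
    (hℓbound : ∀ h₀, eLpNorm (fun x => ℓ x h₀) 2 μ ≤ ENNReal.ofReal (a * ‖h₀‖))
    (hatom : ∀ h₀ h, ⟪k h₀, h⟫_𝕜 = ∫ x, ℓ x h₀ * ⟪f x, h⟫_𝕜 ∂μ) (h : H) :
    ‖(k†) h‖ ≤ a * ‖analysisOperator hf h‖ := by
  set h₀ := (k†) h
  set v := analysisOperator hf h
  let u : Lp 𝕜 2 μ := (hℓL2 h₀).star.toLp _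
  have hu : ‖u‖ ≤ a * ‖h₀‖ := by
    rw [Lp.norm_toLp, eLpNorm_star]
    exact ENNReal.toReal_le_of_le_ofReal (by positivity) (hℓbound h₀)
  have huv : ⟪u, v⟫_𝕜 = ⟪k h₀, h⟫_𝕜 := by
    rw [hatom, L2.inner_def]
    refine integral_congr_ae ?_
    filter_upwards [(hℓL2 h₀).star.coeFn_toLp, coeFn_analysisOperator hf h] with x hux hvx
    rw [RCLike.inner_apply, hux, hvx, Pi.star_apply, RCLike.star_def, RCLike.conj_conj, mul_comm]
  have hsq : ‖h₀‖ ^ 2 ≤ a * ‖h₀‖ * ‖v‖ :=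
    calc ‖h₀‖ ^ 2 = ‖⟪k h₀, h⟫_𝕜‖ := by
          rw [← ContinuousLinearMap.adjoint_inner_right, inner_self_eq_norm_sq_to_K, norm_pow,
            RCLike.norm_ofReal, abs_norm]
      _ = ‖⟪u, v⟫_𝕜‖ := by rw [huv]
      _ ≤ ‖u‖ * ‖v‖ := norm_inner_le_norm u v
      _ ≤ a * ‖h₀‖ * ‖v‖ := by gcongr
  rcases (norm_nonneg h₀).eq_or_lt with h0 | h0
  · rw [← h0]; positivity
  · nlinarith

end AnalysisOperator

theorem ckFrame_of_local_ck_atoms_general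
    {H : Type*} [NormedAddCommGroup H] [InnerProductSpace ℂ H] [CompleteSpace H]
    {H₀ : Type*} [NormedAddCommGroup H₀] [InnerProductSpace ℂ H₀] [CompleteSpace H₀]
    {X : Type*} [MeasurableSpace X] (μ : Measure X) [SigmaFinite μ]
    (k : H₀ →L[ℂ] H) (f : X → H)
    (hweakint : ∀ g : Lp ℂ 2 μ, ∃ v : H,
      (∀ h : H, Integrable (fun x => (g : X → ℂ) x * (inner ℂ (f x) h : ℂ)) μ) ∧
      (∀ h : H, (inner ℂ v h : ℂ) = ∫ x, (g : X → ℂ) x * (inner ℂ (f x) h : ℂ) ∂μ))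
    (a : ℝ) (ha : 0 < a) (ℓ : X → H₀ →ₗ[ℂ] ℂ)
    (hℓL2 : ∀ h₀ : H₀, MemLp (fun x => ℓ x h₀) 2 μ)
    (hℓbound : ∀ h₀ : H₀, eLpNorm (fun x => ℓ x h₀) 2 μ ≤ ENNReal.ofReal (a * ‖h₀‖))
    (hatom : ∀ (h₀ : H₀) (h : H),
      (inner ℂ (k h₀) h : ℂ) = ∫ x, ℓ x h₀ * (inner ℂ (f x) h : ℂ) ∂μ) :
    (∃ B : ℝ, 0 < B ∧ ∀ h : H,
        ∫⁻ x, (‖(inner ℂ h (f x) : ℂ)‖₊ : ℝ≥0∞) ^ 2 ∂μ ≤ ENNReal.ofReal (B * ‖h‖ ^ 2)) ∧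
    (∀ h : H,
        ENNReal.ofReal (a⁻¹ ^ 2 * ‖(ContinuousLinearMap.adjoint k) h‖ ^ 2) ≤
          ∫⁻ x, (‖(inner ℂ h (f x) : ℂ)‖₊ : ℝ≥0∞) ^ 2 ∂μ) := by
  have hf : ∀ h, MemLp (fun x => ⟪f x, h⟫_ℂ) 2 μ := fun h =>
    memLp_two_of_forall_integrable_mul fun g => (hweakint g).elim fun _ hv => hv.1 h
  set T := analysisOperator hf
  refine ⟨⟨‖T‖ ^ 2 + 1, by positivity, fun h => ?_⟩, fun h => ?_⟩
  · rw [lintegral_nnnorm_inner_sq_eq hf]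
    refine ENNReal.ofReal_le_ofReal ?_
    calc ‖T h‖ ^ 2 ≤ (‖T‖ * ‖h‖) ^ 2 := by gcongr; exact T.le_opNorm h
      _ ≤ (‖T‖ ^ 2 + 1) * ‖h‖ ^ 2 := by
          rw [mul_pow]; gcongr; exact le_add_of_nonneg_right zero_le_one
  · rw [lintegral_nnnorm_inner_sq_eq hf]
    refine ENNReal.ofReal_le_ofReal ?_
    have hlower := norm_adjoint_apply_le_mul_norm_analysisOperator hf k (ℓ := fun x => ℓ x)
      ha.le hℓL2 hℓbound hatom h
    calc a⁻¹ ^ 2 * ‖(k†) h‖ ^ 2 = (a⁻¹ * ‖(k†) h‖) ^ 2 := by ring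
      _ ≤ ‖T h‖ ^ 2 := by gcongr; rwa [inv_mul_le_iff₀ ha]

/-- If `f : X → H` is a family of local ck-atoms for `H₀` (i.e. all weak
integrals `∫ g f dμ`, `g ∈ L²`, exist, and there are `a > 0` and linear functionals
`ℓ x : H₀ → ℂ` with `ℓ(·)(h₀) ∈ L²`, `‖ℓ(·)(h₀)‖₂ ≤ a ‖h₀‖` and
`k h₀ = ∫ ℓ(·)(h₀) f dμ` weakly), then `f` is a ck-frame for `H` with respect to `H₀`:
`f` is a c-Bessel mapping (with a positive bound) and
`a⁻² ‖k* h‖² ≤ ∫ |⟨h, f x⟩|² dμ` for all `h ∈ H`. -/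
theorem ckFrame_of_local_ck_atoms
    {H : Type*} [NormedAddCommGroup H] [InnerProductSpace ℂ H] [CompleteSpace H]
    {H₀ : Type*} [NormedAddCommGroup H₀] [InnerProductSpace ℂ H₀] [CompleteSpace H₀]
    {X : Type*} [MeasurableSpace X] (μ : Measure X) [SigmaFinite μ]
    (k : H₀ →L[ℂ] H) (f : X → H)
    (hmeas : ∀ h : H, Measurable fun x => (inner ℂ h (f x) : ℂ))
    (hweakint : ∀ g : Lp ℂ 2 μ, ∃ v : H,
      (∀ h : H, Integrable (fun x => (g : X → ℂ) x * (inner ℂ (f x) h : ℂ)) μ) ∧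
      (∀ h : H, (inner ℂ v h : ℂ) = ∫ x, (g : X → ℂ) x * (inner ℂ (f x) h : ℂ) ∂μ))
    (a : ℝ) (ha : 0 < a) (ℓ : X → H₀ →ₗ[ℂ] ℂ)
    (hℓL2 : ∀ h₀ : H₀, MemLp (fun x => ℓ x h₀) 2 μ)
    (hℓbound : ∀ h₀ : H₀, eLpNorm (fun x => ℓ x h₀) 2 μ ≤ ENNReal.ofReal (a * ‖h₀‖))
    (hatom : ∀ (h₀ : H₀) (h : H),
      (inner ℂ (k h₀) h : ℂ) = ∫ x, ℓ x h₀ * (inner ℂ (f x) h : ℂ) ∂μ) :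
    (∃ B : ℝ, 0 < B ∧ ∀ h : H,
        ∫⁻ x, (‖(inner ℂ h (f x) : ℂ)‖₊ : ℝ≥0∞) ^ 2 ∂μ ≤ ENNReal.ofReal (B * ‖h‖ ^ 2)) ∧
    (∀ h : H,
        ENNReal.ofReal (a⁻¹ ^ 2 * ‖(ContinuousLinearMap.adjoint k) h‖ ^ 2) ≤
          ∫⁻ x, (‖(inner ℂ h (f x) : ℂ)‖₊ : ℝ≥0∞) ^ 2 ∂μ) :=
  ckFrame_of_local_ck_atoms_general μ k f hweakint a ha ℓ hℓL2 hℓbound hatom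
end

section
/- Let H and H₀ be complex Hilbert spaces, (X,μ) a σ-finite measure space, k : H₀ → H a bounded linear operator whose adjoint k* is surjective, f : X → H a c-Bessel mapping for H, and g : X → H₀ a c-Bessel mapping for H₀. If ‖k*(h)‖² = ∫_X ⟨h, f(x)⟩ ⟨g(x), k*(h)⟩ dμ(x) for every h ∈ H, then ⟨k*(h), h₀⟩ = ∫_X ⟨h, f(x)⟩ ⟨g(x), h₀⟩ dμ(x) for all h ∈ H and h₀ ∈ H₀ (and conversely). -/
/-!
Both sides of the assumed identity are diagonals of sesquilinear forms on `H`, namely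
`(a, b) ↦ ⟪k* a, k* b⟫` and `(a, b) ↦ ∫ ⟪a, f x⟫ ⟪g x, k* b⟫ dμ`; the Bessel bounds put both factors
of the integrand in `L²`, so the integral is finite and sesquilinear. Over `ℂ` a sesquilinear form
is determined by its diagonal (polarization), hence `⟪k* a, k* b⟫ = ∫ ⟪a, f x⟫ ⟪g x, k* b⟫ dμ` for
all `a, b`, and surjectivity of `k*` turns `k* b` into an arbitrary `h₀`.
-/

open MeasureTheory
open scoped ENNReal InnerProductSpace

namespace LinearMap

variable {E : Type*} [AddCommGroup E] [Module ℂ E]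

theorem ext_of_apply_self_eq {S T : E →ₗ⋆[ℂ] E →ₗ[ℂ] ℂ} (h : ∀ x, S x x = T x x) : S = T := by
  ext x y
  have hsum := h (x + y)
  have hisum := h (x + Complex.I • y)
  simp only [map_add, map_smulₛₗ, add_apply, smul_apply, smul_eq_mul, Complex.conj_I,
    RingHom.id_apply, h x, h y] at hsum hisum
  linear_combination (hsum - Complex.I * hisum) / 2 +
    (S x y - T x y - S y x + T y x) / 2 * Complex.I_sq

end LinearMap

section BesselPairing

variable {X : Type*} [MeasurableSpace X] {μ : Measure X}

theorem memLp_two_of_lintegral_enorm_sq_lt_top {E : Type*} [NormedAddCommGroup E] {u : X → E}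
    (hu : AEStronglyMeasurable u μ) (h : ∫⁻ x, ‖u x‖ₑ ^ 2 ∂μ < ∞) : MemLp u 2 μ := by
  refine ⟨hu,
    (eLpNorm_lt_top_iff_lintegral_rpow_enorm_lt_top two_ne_zero ENNReal.ofNat_ne_top).2 ?_⟩
  simpa using h

variable {H H₀ : Type*} [NormedAddCommGroup H] [InnerProductSpace ℂ H]
  [NormedAddCommGroup H₀] [InnerProductSpace ℂ H₀] {f : X → H} {g : X → H₀}

noncomputable def besselPairing (hf : ∀ h, MemLp (fun x => ⟪h, f x⟫_ℂ) 2 μ)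
    (hg : ∀ h₀, MemLp (fun x => ⟪g x, h₀⟫_ℂ) 2 μ) : H →ₗ⋆[ℂ] H₀ →ₗ[ℂ] ℂ :=
  have hint (h : H) (h₀ : H₀) : Integrable (fun x => ⟪h, f x⟫_ℂ * ⟪g x, h₀⟫_ℂ) μ :=
    (hf h).integrable_mul (hg h₀)
  LinearMap.mk₂'ₛₗ _ _ (fun h h₀ => ∫ x, ⟪h, f x⟫_ℂ * ⟪g x, h₀⟫_ℂ ∂μ)
    (fun h h' h₀ => by
      simp_rw [inner_add_left, add_mul]; exact integral_add (hint h h₀) (hint h' h₀))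
    (fun c h h₀ => by simp_rw [inner_smul_left, mul_assoc]; exact integral_const_mul _ _)
    (fun h h₀ h₀' => by
      simp_rw [inner_add_right, mul_add]; exact integral_add (hint h h₀) (hint h h₀'))
    (fun c h h₀ => by simp_rw [inner_smul_right, mul_left_comm _ c]; exact integral_const_mul _ _)

@[simp]
theorem besselPairing_apply (hf : ∀ h, MemLp (fun x => ⟪h, f x⟫_ℂ) 2 μ)
    (hg : ∀ h₀, MemLp (fun x => ⟪g x, h₀⟫_ℂ) 2 μ) (h : H) (h₀ : H₀) :
    besselPairing hf hg h h₀ = ∫ x, ⟪h, f x⟫_ℂ * ⟪g x, h₀⟫_ℂ ∂μ :=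
  rfl

end BesselPairing

theorem ck_dual_iff_adjoint_norm_identity_of_adjoint_surjective_general
    {H : Type*} [NormedAddCommGroup H] [InnerProductSpace ℂ H] [CompleteSpace H]
    {H₀ : Type*} [NormedAddCommGroup H₀] [InnerProductSpace ℂ H₀] [CompleteSpace H₀]
    {X : Type*} [MeasurableSpace X] (μ : Measure X)
    (k : H₀ →L[ℂ] H) (hk : Function.Surjective (ContinuousLinearMap.adjoint k))
    (f : X → H) (g : X → H₀)
    (hfmeas : ∀ h : H, Measurable fun x => (inner ℂ h (f x) : ℂ))
    (hgmeas : ∀ h₀ : H₀, Measurable fun x => (inner ℂ h₀ (g x) : ℂ))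
    (B : ℝ)
    (hfBessel : ∀ h : H,
      ∫⁻ x, (‖(inner ℂ h (f x) : ℂ)‖₊ : ℝ≥0∞) ^ 2 ∂μ ≤ ENNReal.ofReal (B * ‖h‖ ^ 2))
    (B' : ℝ)
    (hgBessel : ∀ h₀ : H₀,
      ∫⁻ x, (‖(inner ℂ h₀ (g x) : ℂ)‖₊ : ℝ≥0∞) ^ 2 ∂μ ≤ ENNReal.ofReal (B' * ‖h₀‖ ^ 2)) :
    (∀ h : H, ((‖(ContinuousLinearMap.adjoint k) h‖ ^ 2 : ℝ) : ℂ) =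
        ∫ x, (inner ℂ h (f x) : ℂ) *
          (inner ℂ (g x) ((ContinuousLinearMap.adjoint k) h) : ℂ) ∂μ) ↔
      (∀ (h : H) (h₀ : H₀),
        (inner ℂ ((ContinuousLinearMap.adjoint k) h) h₀ : ℂ) =
          ∫ x, (inner ℂ h (f x) : ℂ) * (inner ℂ (g x) h₀ : ℂ) ∂μ) := by
  set K := ContinuousLinearMap.adjoint k
  have hf (h : H) : MemLp (fun x => ⟪h, f x⟫_ℂ) 2 μ :=
    memLp_two_of_lintegral_enorm_sq_lt_top (hfmeas h).aestronglyMeasurable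
      ((hfBessel h).trans_lt ENNReal.ofReal_lt_top)
  have hg (h₀ : H₀) : MemLp (fun x => ⟪g x, h₀⟫_ℂ) 2 μ := by
    simpa only [Pi.star_def, RCLike.star_def, inner_conj_symm] using
      (memLp_two_of_lintegral_enorm_sq_lt_top (hgmeas h₀).aestronglyMeasurable
        ((hgBessel h₀).trans_lt ENNReal.ofReal_lt_top)).star
  constructor
  · intro hdiag h h₀
    obtain ⟨h', rfl⟩ := hk h₀
    have hforms : ((innerₛₗ ℂ).comp K.toLinearMap).compl₂ K.toLinearMap =
        (besselPairing hf hg).compl₂ K.toLinearMap := by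
      refine LinearMap.ext_of_apply_self_eq fun a => ?_
      simpa [inner_self_eq_norm_sq_to_K] using hdiag a
    simpa using LinearMap.congr_fun₂ hforms h h'
  · intro hpair h
    rw [← hpair h (K h), inner_self_eq_norm_sq_to_K]
    norm_cast

/-- For a bounded operator `k : H₀ → H` with surjective adjoint `k*` and
c-Bessel mappings `f : X → H`, `g : X → H₀`:
`‖k* h‖² = ∫ ⟨h, f x⟩ ⟨g x, k* h⟩ dμ` holds for every `h ∈ H` if and only if
`⟨k* h, h₀⟩ = ∫ ⟨h, f x⟩ ⟨g x, h₀⟩ dμ` for all `h ∈ H`, `h₀ ∈ H₀`. -/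
theorem ck_dual_iff_adjoint_norm_identity_of_adjoint_surjective
    {H : Type*} [NormedAddCommGroup H] [InnerProductSpace ℂ H] [CompleteSpace H]
    {H₀ : Type*} [NormedAddCommGroup H₀] [InnerProductSpace ℂ H₀] [CompleteSpace H₀]
    {X : Type*} [MeasurableSpace X] (μ : Measure X) [SigmaFinite μ]
    (k : H₀ →L[ℂ] H) (hk : Function.Surjective (ContinuousLinearMap.adjoint k))
    (f : X → H) (g : X → H₀)
    (hfmeas : ∀ h : H, Measurable fun x => (inner ℂ h (f x) : ℂ))
    (hgmeas : ∀ h₀ : H₀, Measurable fun x => (inner ℂ h₀ (g x) : ℂ))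
    (B : ℝ)
    (hfBessel : ∀ h : H,
      ∫⁻ x, (‖(inner ℂ h (f x) : ℂ)‖₊ : ℝ≥0∞) ^ 2 ∂μ ≤ ENNReal.ofReal (B * ‖h‖ ^ 2))
    (B' : ℝ)
    (hgBessel : ∀ h₀ : H₀,
      ∫⁻ x, (‖(inner ℂ h₀ (g x) : ℂ)‖₊ : ℝ≥0∞) ^ 2 ∂μ ≤ ENNReal.ofReal (B' * ‖h₀‖ ^ 2)) :
    (∀ h : H, ((‖(ContinuousLinearMap.adjoint k) h‖ ^ 2 : ℝ) : ℂ) =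
        ∫ x, (inner ℂ h (f x) : ℂ) *
          (inner ℂ (g x) ((ContinuousLinearMap.adjoint k) h) : ℂ) ∂μ) ↔
      (∀ (h : H) (h₀ : H₀),
        (inner ℂ ((ContinuousLinearMap.adjoint k) h) h₀ : ℂ) =
          ∫ x, (inner ℂ h (f x) : ℂ) * (inner ℂ (g x) h₀ : ℂ) ∂μ) :=
  ck_dual_iff_adjoint_norm_identity_of_adjoint_surjective_general μ k hk f g hfmeas hgmeas B
    hfBessel B' hgBessel
end
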